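/- Safety for automata policies: if N is a well-formed system (coherent and ⊢N:ok with DFA well-formedness), then for every trustworthy site l[M]{P1|...|Pn} in N where each Pi is a thread, σ ∈ lang(CRE(Pi)) implies that there exists σ' ∈ Acp(M_p) of the form σ' = σ''σ for some word σ''. -/
import Mathlib


universe u

/-! ## Basic framework: trust levels, agents, membranes, systems -/

/-- Trust levels: `loc` (unknown), `lgood`, `lbad`. -/
inductive TrustLev : Type where
  | loc : TrustLev
  | lgood : TrustLev
  | lbad : TrustLev
deriving DecidableEq

/-- The subtyping order `<:` on trust levels: it is reflexive and satisfies
`loc <: lgood` and `loc <: lbad`. -/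
def TrustLev.sub (t1 t2 : TrustLev) : Prop := t1 = t2 ∨ t1 = TrustLev.loc

/-- Agents, parametric on the type `Act` of basic actions, the type `Loc` of
localities, and the type `Pol` of policies (digests carried by `go`). -/
inductive Agent (Act Loc : Type) (Pol : Type u) where
  | nil : Agent Act Loc Pol
  | act : Act → Agent Act Loc Pol → Agent Act Loc Pol
  | go : Loc → Pol → Agent Act Loc Pol → Agent Act Loc Pol
  | par : Agent Act Loc Pol → Agent Act Loc Pol → Agent Act Loc Pol
  | repl : Agent Act Loc Pol → Agent Act Loc Pol

/-- A membrane: a trust function on localities together with a policy.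
(The partial trust function is modelled as a total function, the level `loc`
standing for ``unknown''.) -/
structure Membrane (Loc : Type) (Pol : Type u) where
  trust : Loc → TrustLev
  pol : Pol

/-- Systems: the empty system, a site `l[M]{P}`, or a parallel composition. -/
inductive System (Act Loc : Type) (Pol : Type u) where
  | empty : System Act Loc Pol
  | site : Loc → Membrane Loc Pol → Agent Act Loc Pol → System Act Loc Pol
  | par : System Act Loc Pol → System Act Loc Pol → System Act Loc Pol

variable {Act Loc : Type} {Pol : Type u}

/-- The list of sites (name and membrane) occurring in a system. -/
def System.sites : System Act Loc Pol → List (Loc × Membrane Loc Pol)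
  | System.empty => []
  | System.site l M _ => [(l, M)]
  | System.par N1 N2 => N1.sites ++ N2.sites

/-- A site named `l` with membrane `M` is trustworthy if `M_t(l) = lgood`. -/
def Trustworthy (l : Loc) (M : Membrane Loc Pol) : Prop :=
  M.trust l = TrustLev.lgood

/-- A system is coherent if `M^k_t(l) <: M^l_t(l)` for every trustworthy site `k`
and every site `l` of the system. -/
def Coherent (N : System Act Loc Pol) : Prop :=
  ∀ p ∈ N.sites, Trustworthy p.1 p.2 →
    ∀ q ∈ N.sites, TrustLev.sub (p.2.trust q.1) (q.2.trust q.1)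

/-- `SiteIn l M P N` holds when the site `l[M]{P}` occurs in the system `N`. -/
inductive SiteIn (l : Loc) (M : Membrane Loc Pol) (P : Agent Act Loc Pol) :
    System Act Loc Pol → Prop where
  | here : SiteIn l M P (System.site l M P)
  | left {N1 N2} : SiteIn l M P N1 → SiteIn l M P (System.par N1 N2)
  | right {N1 N2} : SiteIn l M P N2 → SiteIn l M P (System.par N1 N2)

/-- Structural equivalence on agents: `|` is commutative and associative with
unit `nil`, replication unfolds, and `≡` is a congruence for `|`. -/
inductive AgEq : Agent Act Loc Pol → Agent Act Loc Pol → Prop where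
  | refl (P) : AgEq P P
  | symm {P Q} : AgEq P Q → AgEq Q P
  | trans {P Q R} : AgEq P Q → AgEq Q R → AgEq P R
  | parNil (P) : AgEq (Agent.par P Agent.nil) P
  | parComm (P Q) : AgEq (Agent.par P Q) (Agent.par Q P)
  | parAssoc (P Q R) :
      AgEq (Agent.par (Agent.par P Q) R) (Agent.par P (Agent.par Q R))
  | replUnfold (P Q) :
      AgEq (Agent.par (Agent.repl P) Q) (Agent.par P (Agent.par (Agent.repl P) Q))
  | parCong {P P' Q Q'} : AgEq P P' → AgEq Q Q' → AgEq (Agent.par P Q) (Agent.par P' Q')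

/-- Structural equivalence on systems. -/
inductive StrEq : System Act Loc Pol → System Act Loc Pol → Prop where
  | refl (N) : StrEq N N
  | symm {N1 N2} : StrEq N1 N2 → StrEq N2 N1
  | trans {N1 N2 N3} : StrEq N1 N2 → StrEq N2 N3 → StrEq N1 N3
  | parEmpty (N) : StrEq (System.par N System.empty) N
  | parComm (N1 N2) : StrEq (System.par N1 N2) (System.par N2 N1)
  | parAssoc (N1 N2 N3) :
      StrEq (System.par (System.par N1 N2) N3) (System.par N1 (System.par N2 N3))
  | parCong {N1 N1' N2 N2'} :
      StrEq N1 N1' → StrEq N2 N2' → StrEq (System.par N1 N2) (System.par N1' N2')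
  | site (l M) {P Q} : AgEq P Q → StrEq (System.site l M P) (System.site l M Q)

/-- The reduction relation over systems, parametric on the `enforces`
relation `enf` between policies and on the typechecking relation `typ`
between agents and policies.  In rule `mig`, if the target site `l` trusts
the source site `k` then the digest `T` is checked against `l`'s policy,
otherwise the full code `P` is typechecked. -/
inductive Red (enf : Pol → Pol → Prop) (typ : Agent Act Loc Pol → Pol → Prop) :
    System Act Loc Pol → System Act Loc Pol → Prop where
  | act (l M a P Q) :
      Red enf typ (System.site l M (Agent.par (Agent.act a P) Q))
        (System.site l M (Agent.par P Q))
  | par {N1 N1'} (N2) :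
      Red enf typ N1 N1' → Red enf typ (System.par N1 N2) (System.par N1' N2)
  | struct {N N1 N1' N'} :
      StrEq N N1 → Red enf typ N1 N1' → StrEq N1' N' → Red enf typ N N'
  | mig (k Mk l Ml T P Q R) :
      (if Ml.trust k = TrustLev.lgood then enf T Ml.pol else typ P Ml.pol) →
      Red enf typ
        (System.par (System.site k Mk (Agent.par (Agent.go l T P) Q))
          (System.site l Ml R))
        (System.par (System.site k Mk Q) (System.site l Ml (Agent.par P R)))

/-- The labelled transition system over agents, with labels in `Act ⊕ Loc`. -/
inductive Step : Agent Act Loc Pol → (Act ⊕ Loc) → Agent Act Loc Pol → Prop where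
  | act (a P) : Step (Agent.act a P) (Sum.inl a) P
  | mig (l T P) : Step (Agent.go l T P) (Sum.inr l) Agent.nil
  | repl {P α P'} :
      Step (Agent.par P (Agent.repl P)) α P' → Step (Agent.repl P) α P'
  | parL {P1 α P1'} (P2) :
      Step P1 α P1' → Step (Agent.par P1 P2) α (Agent.par P1' P2)
  | parR {P1 α P1'} (P2) :
      Step P1 α P1' → Step (Agent.par P2 P1) α (Agent.par P2 P1')

/-- `Trace P σ P'` means `P →σ P'`: the composite of the single steps of `σ`. -/
inductive Trace : Agent Act Loc Pol → List (Act ⊕ Loc) → Agent Act Loc Pol → Prop where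
  | nil (P) : Trace P [] P
  | cons {P α P' σ P''} : Step P α P' → Trace P' σ P'' → Trace P (α :: σ) P''

/-- The thread components of an agent: every agent is `P1 | ... | Pn`
with each `Pi` a thread (not itself a parallel composition). -/
def Agent.comps : Agent Act Loc Pol → List (Agent Act Loc Pol)
  | Agent.par P Q => P.comps ++ Q.comps
  | P => [P]

/-- A thread is an agent which is not a parallel composition. -/
def Agent.IsThread : Agent Act Loc Pol → Prop
  | Agent.par _ _ => False
  | _ => True

/-! ## Concurrent regular expressions and their languages -/

/-- Concurrent regular expressions over an alphabet `α`:
`ε`, characters, concatenation, shuffle `⊙` and shuffle closure `^⊗`. -/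
inductive CRE (α : Type) : Type where
  | eps : CRE α
  | char : α → CRE α
  | seq : CRE α → CRE α → CRE α
  | shuffle : CRE α → CRE α → CRE α
  | shuffleStar : CRE α → CRE α

/-- The shuffle (interleaving) of two languages:
`{x1 y1 ⋯ xn yn : x1⋯xn ∈ L1, y1⋯yn ∈ L2}` (the factors may be empty). -/
def shuffleLang {α : Type} (L1 L2 : Language α) : Language α :=
  {w | ∃ ps : List (List α × List α),
      w = (ps.map fun p => p.1 ++ p.2).flatten ∧
      (ps.map Prod.fst).flatten ∈ L1 ∧ (ps.map Prod.snd).flatten ∈ L2}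

/-- `n`-fold shuffle of a language with itself. -/
def shufflePow {α : Type} (L : Language α) : ℕ → Language α
  | 0 => {[]}
  | n + 1 => shuffleLang (shufflePow L n) L

/-- The language of a concurrent regular expression. -/
def CRE.lang {α : Type} : CRE α → Language α
  | CRE.eps => {[]}
  | CRE.char a => {[a]}
  | CRE.seq e1 e2 => {w | ∃ x ∈ e1.lang, ∃ y ∈ e2.lang, w = x ++ y}
  | CRE.shuffle e1 e2 => shuffleLang e1.lang e2.lang
  | CRE.shuffleStar e => ⋃ n, shufflePow e.lang n

/-- The concurrent regular expression associated to an agent: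
`CRE(nil)=ε`, `CRE(a.P)=a.CRE(P)`, `CRE(go(l,A).P)=l`,
`CRE(P|Q)=CRE(P)⊙CRE(Q)`, `CRE(!P)=CRE(P)^⊗`. -/
def Agent.cre : Agent Act Loc Pol → CRE (Act ⊕ Loc)
  | Agent.nil => CRE.eps
  | Agent.act a P => CRE.seq (CRE.char (Sum.inl a)) P.cre
  | Agent.go l _ _ => CRE.char (Sum.inr l)
  | Agent.par P Q => CRE.shuffle P.cre Q.cre
  | Agent.repl P => CRE.shuffleStar P.cre

/-! ## DFA policies -/

/-- A DFA policy: a deterministic finite automaton over the alphabet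
`Act ⊕ Loc`, with a finite state set, a nonempty set of accepting states,
and minimal (all states reachable and pairwise distinguishable). -/
structure DFAPol (Act Loc : Type) : Type 1 where
  State : Type
  fin : Finite State
  dfa : DFA (Act ⊕ Loc) State
  acc_nonempty : dfa.accept.Nonempty
  reachable : ∀ s : State, ∃ σ : List (Act ⊕ Loc), dfa.evalFrom dfa.start σ = s
  distinguishable : ∀ s t : State,
      (∀ σ, dfa.evalFrom s σ ∈ dfa.accept ↔ dfa.evalFrom t σ ∈ dfa.accept) → s = t

/-- `Acp_s(A)`: the words leading `A` from state `s` to a final state. -/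
def DFAPol.Acp {Act Loc : Type} (A : DFAPol Act Loc) (s : A.State) :
    Language (Act ⊕ Loc) :=
  {σ | A.dfa.evalFrom s σ ∈ A.dfa.accept}

/-- `Acp(A) = Acp_{s0}(A)`. -/
def DFAPol.AcpStart {Act Loc : Type} (A : DFAPol Act Loc) : Language (Act ⊕ Loc) :=
  A.Acp A.dfa.start

/-- `A1` enforces `A2` iff `Acp(A1) ≤ Acp(A2)`. -/
def DFAPol.Enforces {Act Loc : Type} (A1 A2 : DFAPol Act Loc) : Prop :=
  A1.AcpStart ≤ A2.AcpStart

/-- `GoOk P` holds iff every subagent of `P` of the form `go(l,A').Q`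
satisfies `⊢ Q : A'`. -/
def GoOk : Agent Act Loc (DFAPol Act Loc) → Prop
  | Agent.nil => True
  | Agent.act _ P => GoOk P
  | Agent.go _ A' Q => Q.cre.lang ≤ A'.AcpStart ∧ GoOk Q
  | Agent.par P Q => GoOk P ∧ GoOk Q
  | Agent.repl P => GoOk P

/-- DFA satisfaction `⊢ P : A`: `lang(CRE(P)) ≤ Acp(A)` and `⊢ Q : A'` for
every subagent of `P` of the form `go(l,A').Q`. -/
def DSat (P : Agent Act Loc (DFAPol Act Loc)) (A : DFAPol Act Loc) : Prop :=
  P.cre.lang ≤ A.AcpStart ∧ GoOk P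

/-- Well-formedness of systems for DFA policies: at a trustworthy site, each
thread component `Pi` of the resident code satisfies
`lang(CRE(Pi)) ≤ Acp_s(M_p)` for some state `s` (and its migrating subagents
conform to their digests). -/
inductive OkA : System Act Loc (DFAPol Act Loc) → Prop where
  | empty : OkA System.empty
  | par {N1 N2} : OkA N1 → OkA N2 → OkA (System.par N1 N2)
  | siteU {l M P} : ¬ Trustworthy l M → OkA (System.site l M P)
  | siteG {l M P} :
      Trustworthy l M →
      (∀ Pi ∈ Agent.comps P,
        ∃ s : M.pol.State, Pi.cre.lang ≤ M.pol.Acp s ∧ GoOk Pi) →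
      OkA (System.site l M P)

lemma okA_site {Act Loc : Type} {N : System Act Loc (DFAPol Act Loc)}
    (hok : OkA N) {l M P} (hsite : SiteIn l M P N) (htw : Trustworthy l M) :
    ∀ Pi ∈ Agent.comps P, ∃ s : M.pol.State, Pi.cre.lang ≤ M.pol.Acp s ∧ GoOk Pi := by
  induction hsite with
  | here => cases hok with
    | siteU h => exact absurd htw h
    | siteG _ h => exact h
  | left _ ih => cases hok with | par h1 h2 => exact ih h1
  | right _ ih => cases hok with | par h1 h2 => exact ih h2

/-- **Safety for automata policies**: if `N` is a well-formed system (coherent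
and `⊢ N : ok` with DFA well-formedness), then for every trustworthy site
`l[M]{P1|...|Pn}` in `N` where each `Pi` is a thread, `σ ∈ lang(CRE(Pi))`
implies that there exists `σ' ∈ Acp(M_p)` of the form `σ' = σ''σ` for some
word `σ''`. -/
theorem safety_dfa
    {N : System Act Loc (DFAPol Act Loc)}
    (hcoh : Coherent N) (hok : OkA N)
    {l : Loc} {M : Membrane Loc (DFAPol Act Loc)} {P : Agent Act Loc (DFAPol Act Loc)}
    (hsite : SiteIn l M P N) (htw : Trustworthy l M)
    {Pi : Agent Act Loc (DFAPol Act Loc)} (hPi : Pi ∈ Agent.comps P)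
    {σ : List (Act ⊕ Loc)} (hσ : σ ∈ Pi.cre.lang) :
    ∃ σ' ∈ M.pol.AcpStart, ∃ σ'', σ' = σ'' ++ σ := by
  obtain ⟨s, hle, -⟩ := okA_site hok hsite htw Pi hPi
  obtain ⟨σ'', hreach⟩ := M.pol.reachable s
  refine ⟨σ'' ++ σ, ?_, σ'', rfl⟩
  show M.pol.dfa.evalFrom M.pol.dfa.start (σ'' ++ σ) ∈ M.pol.dfa.accept
  rw [DFA.evalFrom_of_append, hreach]
  exact hle hσ
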